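/- arXiv:1811.00069 — 2 statements merged into one kernel-verified Lean document; each statement's English description precedes it below -/
import Mathlib

section
/- Let A ∈ ℝ^{n×n}, B ∈ ℝ^{n×q}, and let M := [[−(A+A^T), B],[B^T, 0]] be the associated saddle-point matrix. There exists a matrix K ∈ ℝ^{q×n} such that (A−BK)+(A−BK)^T is negative definite if and only if there exist a symmetric positive definite matrix D ∈ ℝ^{(n+q)×(n+q)}, a matrix Z ∈ ℝ^{(n+q)×n} with Z^T D Z = I_n, and a diagonal positive definite matrix Λ ∈ ℝ^{n×n} such that M Z = D Z Λ (i.e. the pencil (M, D) admits n positive eigenvalues with D-orthonormal eigenvectors). -/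
/-!
Put `Q = -(A + Aᵀ)` and `P = Q + BK + KᵀBᵀ`, so that `(A - BK) + (A - BK)ᵀ = -P`. Congruence by
`G = [[1, 0], [-K, 1]]` carries `M' = [[P, B], [Bᵀ, 0]]` to the saddle matrix `M = Gᵀ M' G`, and it
carries solutions of the pencil problem for `(M', D')` to solutions for `(M, Gᵀ D' G)`. If `P` is
positive definite, then `D' = [[P, B], [Bᵀ, BᵀP⁻¹B + 1]]` (positive definite by its Schur
complement) and `Z' = [P^(-1/2); 0]` solve the pencil problem for `M'` with every eigenvalue `1`.

Conversely, `ZᵀMZ = diag d` makes the quadratic form of `M` positive on the range of `Z`. This form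
is `x ⬝ Qx + 2 x ⬝ By` at `(x, y)`, so it vanishes when `x = 0`. Hence the top block of `Z` is
invertible, and evaluating the form at a vector whose top block lies in `ker Bᵀ` shows that `Q` is
positive on `ker Bᵀ`. Finsler's lemma (compactness of the unit sphere) then gives `c > 0` such
that `Q + c BBᵀ` is positive definite, and `K = (c/2) Bᵀ` works.
-/

open Matrix

theorem IsCompact.exists_pos_forall_add_mul_pos {X : Type*} [TopologicalSpace X] {S : Set X}
    (hS : IsCompact S) {f g : X → ℝ} (hf : Continuous f) (hg : Continuous g)
    (hf₀ : ∀ x, 0 ≤ f x) (h : ∀ x ∈ S, f x = 0 → 0 < g x) :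
    ∃ c, 0 < c ∧ ∀ x ∈ S, 0 < g x + c * f x := by
  let U : ℕ → Set X := fun k => {x | 0 < g x + (k + 1) * f x}
  have hU : Monotone U := fun j k hjk x hx => by
    have : ((j : ℝ) + 1) * f x ≤ (k + 1) * f x := mul_le_mul_of_nonneg_right (by gcongr) (hf₀ x)
    simp only [U, Set.mem_ofPred_eq] at hx ⊢
    linarith
  have hcover : S ⊆ ⋃ k, U k := fun x hx => by
    rcases (hf₀ x).eq_or_lt with hfx | hfx
    · exact Set.mem_iUnion.2 ⟨0, by simp [U, ← hfx, h x hx hfx.symm]⟩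
    · obtain ⟨k, hk⟩ := exists_nat_gt (-g x / f x)
      rw [div_lt_iff₀ hfx] at hk
      refine Set.mem_iUnion.2 ⟨k, ?_⟩
      simp only [U, Set.mem_ofPred_eq]
      nlinarith
  obtain ⟨k, hk⟩ := hS.elim_directed_cover U
    (fun k => isOpen_lt continuous_const (hg.add (continuous_const.mul hf))) hcover hU.directed_le
  exact ⟨k + 1, by positivity, hk⟩

section QuadraticForms

variable {m l : Type*} [Fintype m] [Fintype l]

theorem dotProduct_mul_transpose_mulVec (B : Matrix m l ℝ) (x : m → ℝ) :
    x ⬝ᵥ (B * Bᵀ) *ᵥ x = (Bᵀ *ᵥ x) ⬝ᵥ (Bᵀ *ᵥ x) := by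
  rw [← mulVec_mulVec, dotProduct_mulVec, ← mulVec_transpose]

theorem exists_pos_forall_dotProduct_add_smul_mul_transpose_mulVec_pos (Q : Matrix m m ℝ)
    (B : Matrix m l ℝ) (h : ∀ x ≠ 0, Bᵀ *ᵥ x = 0 → 0 < x ⬝ᵥ Q *ᵥ x) :
    ∃ c : ℝ, 0 < c ∧ ∀ x ≠ 0, 0 < x ⬝ᵥ (Q + c • (B * Bᵀ)) *ᵥ x := by
  have hquad (N : Matrix m m ℝ) : Continuous fun x : m → ℝ => x ⬝ᵥ N *ᵥ x :=
    continuous_id.dotProduct (continuous_const.matrix_mulVec continuous_id)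
  obtain ⟨c, hc, hsphere⟩ := (isCompact_sphere (0 : m → ℝ) 1).exists_pos_forall_add_mul_pos
    (hquad (B * Bᵀ)) (hquad Q)
    (fun x => by rw [dotProduct_mul_transpose_mulVec]; exact dotProduct_star_self_nonneg _)
    (fun x hx hBx => h x (ne_zero_of_mem_unit_sphere ⟨x, hx⟩) <| by
      rwa [dotProduct_mul_transpose_mulVec, dotProduct_self_eq_zero] at hBx)
  refine ⟨c, hc, fun x hx => ?_⟩
  have hnorm : 0 < ‖x‖ := norm_pos_iff.2 hx
  have hunit := hsphere (‖x‖⁻¹ • x) (by simp [norm_smul, hnorm.ne'])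
  simp only [mulVec_smul, dotProduct_smul, smul_dotProduct, smul_eq_mul] at hunit
  rw [add_mulVec, smul_mulVec, dotProduct_add, dotProduct_smul, smul_eq_mul]
  have hscaled : 0 < ‖x‖⁻¹ ^ 2 * (x ⬝ᵥ Q *ᵥ x + c * x ⬝ᵥ (B * Bᵀ) *ᵥ x) := by linarith
  exact pos_of_mul_pos_right hscaled (by positivity)

theorem sumElim_dotProduct_fromBlocks_mulVec (Q : Matrix m m ℝ) (B : Matrix m l ℝ)
    (x : m → ℝ) (y : l → ℝ) :
    Sum.elim x y ⬝ᵥ fromBlocks Q B Bᵀ 0 *ᵥ Sum.elim x y = x ⬝ᵥ Q *ᵥ x + 2 * (x ⬝ᵥ B *ᵥ y) := by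
  rw [fromBlocks_mulVec, Sum.elim_comp_inl, Sum.elim_comp_inr, zero_mulVec, add_zero,
    sumElim_dotProduct_sumElim, dotProduct_add, dotProduct_transpose_mulVec]
  ring

theorem dotProduct_mulVec_pos_of_transpose_mulVec_eq_zero [DecidableEq m] {Q : Matrix m m ℝ}
    {B : Matrix m l ℝ} {Z : Matrix (m ⊕ l) m ℝ}
    (hZ : ∀ c ≠ 0, 0 < (Z *ᵥ c) ⬝ᵥ fromBlocks Q B Bᵀ 0 *ᵥ (Z *ᵥ c))
    {x : m → ℝ} (hx : x ≠ 0) (hBx : Bᵀ *ᵥ x = 0) : 0 < x ⬝ᵥ Q *ᵥ x := by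
  have hZc (c : m → ℝ) : Z *ᵥ c = Sum.elim (Z.toRows₁ *ᵥ c) (Z.toRows₂ *ᵥ c) := by
    rw [← fromRows_mulVec, fromRows_toRows]
  have hdet : Z.toRows₁.det ≠ 0 := by
    intro hdet
    obtain ⟨c, hc0, hc⟩ := exists_mulVec_eq_zero_iff.2 hdet
    have := hZ c hc0
    rw [hZc, sumElim_dotProduct_fromBlocks_mulVec, hc, zero_dotProduct, zero_dotProduct, mul_zero,
      add_zero] at this
    exact this.false
  obtain ⟨c, rfl⟩ := mulVec_surjective_iff_isUnit.2 ((isUnit_iff_isUnit_det _).2 hdet.isUnit) x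
  have := hZ c (by rintro rfl; exact hx (mulVec_zero _))
  rwa [hZc, sumElim_dotProduct_fromBlocks_mulVec, ← dotProduct_transpose_mulVec B, hBx,
    dotProduct_zero, mul_zero, add_zero] at this

end QuadraticForms

section PosDef

variable {m l : Type*} [Fintype m] [Fintype l] [DecidableEq m]

open scoped MatrixOrder in
theorem Matrix.PosDef.exists_transpose_mul_mul_eq_one {P : Matrix m m ℝ} (hP : P.PosDef) :
    ∃ Z : Matrix m m ℝ, Zᵀ * P * Z = 1 := by
  set R := CFC.sqrt P
  have hRR : R * R = P := CFC.sqrt_mul_sqrt_self P hP.posSemidef.nonneg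
  have hRt : Rᵀ = R := by
    rw [← conjTranspose_eq_transpose_of_trivial]
    exact (CFC.sqrt_nonneg P).posSemidef.isHermitian.eq
  have hR : IsUnit R.det := (isUnit_iff_isUnit_det R).1 ((CFC.isUnit_sqrt_iff P).2 hP.isUnit)
  refine ⟨R⁻¹, ?_⟩
  rw [transpose_nonsing_inv, hRt, ← hRR, ← Matrix.mul_assoc, nonsing_inv_mul _ hR, Matrix.one_mul,
    mul_nonsing_inv _ hR]

theorem Matrix.PosDef.fromBlocks_of_posDef_sub {A : Matrix m m ℝ} (hA : A.PosDef)
    (B : Matrix m l ℝ) {D : Matrix l l ℝ} (hD : (D - Bᵀ * A⁻¹ * B).PosDef) :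
    (fromBlocks A B Bᵀ D).PosDef := by
  have := hA.isUnit.invertible
  rw [← conjTranspose_eq_transpose_of_trivial] at hD ⊢
  refine .of_dotProduct_mulVec_pos ((IsHermitian.fromBlocks₁₁ B D hA.1).2 hD.1) fun v hv => ?_
  rw [← Sum.elim_comp_inl_inr v, dotProduct_mulVec, schur_complement_eq₁₁ B D _ _ hA.1,
    ← dotProduct_mulVec, ← dotProduct_mulVec]
  rcases eq_or_ne (v ∘ Sum.inr) 0 with hy | hy
  · have hx : v ∘ Sum.inl ≠ 0 := fun hx =>
      hv (by rw [← Sum.elim_comp_inl_inr v, hx, hy, Sum.elim_zero_zero])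
    simpa [hy] using hA.dotProduct_mulVec_pos hx
  · exact add_pos_of_nonneg_of_pos (hA.posSemidef.dotProduct_mulVec_nonneg _)
      (hD.dotProduct_mulVec_pos hy)

end PosDef

section Pencil

variable {ι m : Type*} [Fintype ι] [Fintype m] [DecidableEq m]

def IsOrthonormalPosEigenvectors (M D : Matrix ι ι ℝ) (Z : Matrix ι m ℝ) : Prop :=
  ∃ d : m → ℝ, (∀ i, 0 < d i) ∧ Zᵀ * D * Z = 1 ∧ M * Z = D * Z * diagonal d

namespace IsOrthonormalPosEigenvectors

variable {M D : Matrix ι ι ℝ} {Z : Matrix ι m ℝ}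

theorem congr [DecidableEq ι] (h : IsOrthonormalPosEigenvectors M D Z) {G H : Matrix ι ι ℝ}
    (hGH : G * H = 1) : IsOrthonormalPosEigenvectors (Gᵀ * M * G) (Gᵀ * D * G) (H * Z) := by
  obtain ⟨d, hd, hZ, hMZ⟩ := h
  have hGHZ : G * (H * Z) = Z := by rw [← Matrix.mul_assoc, hGH, Matrix.one_mul]
  refine ⟨d, hd, ?_, ?_⟩
  · calc (H * Z)ᵀ * (Gᵀ * D * G) * (H * Z) = (G * (H * Z))ᵀ * D * (G * (H * Z)) := by
          simp only [transpose_mul, Matrix.mul_assoc]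
      _ = 1 := by rw [hGHZ, hZ]
  · simp only [Matrix.mul_assoc, hGHZ]
    rw [hMZ, Matrix.mul_assoc]

theorem dotProduct_mulVec_pos (h : IsOrthonormalPosEigenvectors M D Z) {c : m → ℝ} (hc : c ≠ 0) :
    0 < (Z *ᵥ c) ⬝ᵥ M *ᵥ (Z *ᵥ c) := by
  obtain ⟨d, hd, hZ, hMZ⟩ := h
  have hZMZ : Zᵀ * M * Z = diagonal d := by
    rw [Matrix.mul_assoc, hMZ, ← Matrix.mul_assoc, ← Matrix.mul_assoc, hZ, Matrix.one_mul]
  have := (PosDef.diagonal hd).dotProduct_mulVec_pos hc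
  rwa [← hZMZ, star_trivial, ← mulVec_mulVec, ← mulVec_mulVec, dotProduct_mulVec,
    vecMul_transpose] at this

end IsOrthonormalPosEigenvectors

end Pencil

section Feedback

variable {m l : Type*} [Fintype m] [Fintype l] [DecidableEq m]

theorem exists_feedback_of_isOrthonormalPosEigenvectors {Q : Matrix m m ℝ} {B : Matrix m l ℝ}
    {D : Matrix (m ⊕ l) (m ⊕ l) ℝ} {Z : Matrix (m ⊕ l) m ℝ}
    (hZ : IsOrthonormalPosEigenvectors (fromBlocks Q B Bᵀ 0) D Z) :
    ∃ K : Matrix l m ℝ, ∀ x ≠ 0, 0 < x ⬝ᵥ (Q + B * K + Kᵀ * Bᵀ) *ᵥ x := by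
  obtain ⟨c, -, hc⟩ := exists_pos_forall_dotProduct_add_smul_mul_transpose_mulVec_pos Q B
    fun _ => dotProduct_mulVec_pos_of_transpose_mulVec_eq_zero fun _ => hZ.dotProduct_mulVec_pos
  refine ⟨(c / 2) • Bᵀ, fun x hx => ?_⟩
  convert hc x hx using 3
  rw [Matrix.mul_smul, transpose_smul, transpose_transpose, Matrix.smul_mul, add_assoc,
    ← add_smul, add_halves]

variable [DecidableEq l]

theorem exists_isOrthonormalPosEigenvectors_fromBlocks_of_posDef {P : Matrix m m ℝ}
    (hP : P.PosDef) (B : Matrix m l ℝ) :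
    ∃ D : Matrix (m ⊕ l) (m ⊕ l) ℝ, D.PosDef ∧
      ∃ Z : Matrix (m ⊕ l) m ℝ, IsOrthonormalPosEigenvectors (fromBlocks P B Bᵀ 0) D Z := by
  obtain ⟨Z₁, hZ₁⟩ := hP.exists_transpose_mul_mul_eq_one
  refine ⟨fromBlocks P B Bᵀ (Bᵀ * P⁻¹ * B + 1),
    hP.fromBlocks_of_posDef_sub B (by simpa using PosDef.one), fromRows Z₁ 0,
    fun _ => 1, fun _ => one_pos, ?_, ?_⟩
  · rw [Matrix.mul_assoc, fromBlocks_mul_fromRows, transpose_fromRows, fromCols_mul_fromRows]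
    simpa [Matrix.mul_assoc] using hZ₁
  · simp [fromBlocks_mul_fromRows]

theorem fromBlocks_eq_transpose_mul_fromBlocks_mul (Q : Matrix m m ℝ) (B : Matrix m l ℝ)
    (K : Matrix l m ℝ) :
    fromBlocks Q B Bᵀ 0 = (fromBlocks 1 0 (-K) 1)ᵀ *
      fromBlocks (Q + B * K + Kᵀ * Bᵀ) B Bᵀ 0 * fromBlocks 1 0 (-K) 1 := by
  simp [fromBlocks_transpose, fromBlocks_multiply]

theorem exists_isOrthonormalPosEigenvectors_of_posDef {Q : Matrix m m ℝ} {B : Matrix m l ℝ}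
    {K : Matrix l m ℝ} (hK : (Q + B * K + Kᵀ * Bᵀ).PosDef) :
    ∃ D : Matrix (m ⊕ l) (m ⊕ l) ℝ, D.PosDef ∧
      ∃ Z : Matrix (m ⊕ l) m ℝ, IsOrthonormalPosEigenvectors (fromBlocks Q B Bᵀ 0) D Z := by
  obtain ⟨D, hD, Z, hZ⟩ := exists_isOrthonormalPosEigenvectors_fromBlocks_of_posDef hK B
  have hGH : fromBlocks 1 0 (-K) 1 * fromBlocks 1 0 K 1 = (1 : Matrix (m ⊕ l) (m ⊕ l) ℝ) := by
    simp [fromBlocks_multiply]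
  refine ⟨_, hD.conjTranspose_mul_mul_same (mulVec_injective_of_isUnit (.of_mul_eq_one _ hGH)),
    _, fromBlocks_eq_transpose_mul_fromBlocks_mul Q B K ▸ hZ.congr hGH⟩

theorem exists_feedback_iff_exists_isOrthonormalPosEigenvectors {Q : Matrix m m ℝ}
    (hQ : Qᵀ = Q) (B : Matrix m l ℝ) :
    (∃ K : Matrix l m ℝ, ∀ x ≠ 0, 0 < x ⬝ᵥ (Q + B * K + Kᵀ * Bᵀ) *ᵥ x) ↔
      ∃ D : Matrix (m ⊕ l) (m ⊕ l) ℝ, D.PosDef ∧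
        ∃ Z : Matrix (m ⊕ l) m ℝ, IsOrthonormalPosEigenvectors (fromBlocks Q B Bᵀ 0) D Z := by
  constructor
  · rintro ⟨K, hK⟩
    have hsymm : (Q + B * K + Kᵀ * Bᵀ).IsHermitian := by
      rw [IsHermitian, conjTranspose_eq_transpose_of_trivial, transpose_add, transpose_add,
        transpose_mul, transpose_mul, transpose_transpose, transpose_transpose, hQ, add_right_comm]
    exact exists_isOrthonormalPosEigenvectors_of_posDef
      (.of_dotProduct_mulVec_pos hsymm fun x hx => by simpa using hK x hx)
  · rintro ⟨_, -, _, hZ⟩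
    exact exists_feedback_of_isOrthonormalPosEigenvectors hZ

end Feedback

/-- Theorem 3.6 of the paper: a dissipating feedback `K` exists if and
only if the pencil `(M, D)` admits `n` positive eigenvalues (with `D`-orthonormal
eigenvectors) for some symmetric positive definite matrix `D`. -/
theorem dissipating_iff_pencil {n q : ℕ}
    (A : Matrix (Fin n) (Fin n) ℝ) (B : Matrix (Fin n) (Fin q) ℝ) :
    (∃ K : Matrix (Fin q) (Fin n) ℝ,
        ∀ x : Fin n → ℝ, x ≠ 0 →
          x ⬝ᵥ (((A - B * K) + (A - B * K)ᵀ) *ᵥ x) < 0) ↔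
      ∃ D : Matrix (Fin n ⊕ Fin q) (Fin n ⊕ Fin q) ℝ, D.PosDef ∧
        ∃ (Z : Matrix (Fin n ⊕ Fin q) (Fin n) ℝ) (d : Fin n → ℝ),
          (∀ i, 0 < d i) ∧ Zᵀ * D * Z = 1 ∧
          Matrix.fromBlocks (-(A + Aᵀ)) B Bᵀ 0 * Z = D * Z * Matrix.diagonal d := by
  have hclosedLoop (K : Matrix (Fin q) (Fin n) ℝ) :
      (A - B * K) + (A - B * K)ᵀ = -(-(A + Aᵀ) + B * K + Kᵀ * Bᵀ) := by
    rw [transpose_sub, transpose_mul]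
    abel
  simp only [hclosedLoop, neg_mulVec, dotProduct_neg, neg_lt_zero]
  exact exists_feedback_iff_exists_isOrthonormalPosEigenvectors
    (by rw [transpose_neg, transpose_add, transpose_transpose, add_comm]) B
end

section
/- Let A ∈ ℝ^{n×n}, B ∈ ℝ^{n×q}. Assume A + A^T is negative definite on the kernel of B^T (x^T(A+A^T)x < 0 for every nonzero x with B^T x = 0) and that the largest eigenvalue of (A+A^T)/2 is positive. Then the set W of weakly dissipating feedback matrices K ∈ ℝ^{q×n} is nonempty, and the infimum of the Frobenius norm ‖K‖_F over K ∈ W is attained, i.e. there exists K_* ∈ W with ‖K_*‖_F = inf{‖K‖_F : K ∈ W}. -/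
/-!
Along the ray `K = t • Bᵀ` the quadratic form of `(A - BK) + (A - BK)ᵀ` is
`xᵀ(A + Aᵀ)x - 2t‖Bᵀx‖²`. Its maximum over the unit sphere depends continuously on `t`; it is
positive at `t = 0` (test against an eigenvector of the positive eigenvalue) and negative for
large `t`, because on the compact sphere `xᵀ(A + Aᵀ)x < N‖Bᵀx‖²` for some `N`, the form being
negative where `Bᵀx = 0`. Where the maximum vanishes, `(A - BK) + (A - BK)ᵀ` is negative
semidefinite and its quadratic form vanishes at a unit vector, which is then in its kernel.
Finally the weakly dissipating feedbacks form a closed set, on which the Frobenius norm attains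
its minimum since closed balls of matrices are compact.
-/

open Matrix

/-- The Frobenius norm of a real matrix. -/
noncomputable def frobNorm {q n : ℕ} (K : Matrix (Fin q) (Fin n) ℝ) : ℝ :=
  Real.sqrt (∑ i, ∑ j, (K i j) ^ 2)

/-- The set of weakly dissipating feedback matrices for the pair `(A, B)`:
those `K` for which `(A−BK)+(A−BK)ᵀ` is negative semidefinite and singular. -/
def weaklyDissipating {n q : ℕ} (A : Matrix (Fin n) (Fin n) ℝ)
    (B : Matrix (Fin n) (Fin q) ℝ) : Set (Matrix (Fin q) (Fin n) ℝ) :=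
  {K | (-((A - B * K) + (A - B * K)ᵀ)).PosSemidef ∧
    ¬ IsUnit ((A - B * K) + (A - B * K)ᵀ).det}

open Metric Set

section
variable {X : Type*} [TopologicalSpace X] {s : Set X}

theorem IsCompact.exists_nat_forall_lt_mul (hs : IsCompact s) {h g : X → ℝ}
    (hh : Continuous h) (hg : Continuous g) (hg0 : ∀ x, 0 ≤ g x)
    (hzero : ∀ x ∈ s, g x = 0 → h x < 0) : ∃ N : ℕ, ∀ x ∈ s, h x < N * g x := by
  have hcover : s ⊆ ⋃ N : ℕ, {x | h x < N * g x} := by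
    intro x hx
    rcases (hg0 x).eq_or_lt with hgx | hgx
    · exact mem_iUnion.2 ⟨0, by simpa using hzero x hx hgx.symm⟩
    · obtain ⟨N, hN⟩ := exists_nat_gt (h x / g x)
      exact mem_iUnion.2 ⟨N, (div_lt_iff₀ hgx).1 hN⟩
  have hmono : Monotone fun N : ℕ => {x | h x < N * g x} := fun M N hMN x hx =>
    hx.trans_le (mul_le_mul_of_nonneg_right (by exact_mod_cast hMN) (hg0 x))
  exact hs.elim_directed_cover _ (fun N => isOpen_lt hh (continuous_const.mul hg)) hcover
    hmono.directed_le

theorem IsCompact.exists_forall_le_zero_and_exists_eq_zero (hs : IsCompact s)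
    {φ : ℝ → X → ℝ} (hφ : Continuous ↿φ) {a b : ℝ} (hab : a ≤ b)
    (ha : ∃ x ∈ s, 0 ≤ φ a x) (hb : ∀ x ∈ s, φ b x ≤ 0) :
    ∃ t ∈ Icc a b, (∀ x ∈ s, φ t x ≤ 0) ∧ ∃ x ∈ s, φ t x = 0 := by
  obtain ⟨x₀, hx₀, hx₀a⟩ := ha
  have hne : s.Nonempty := ⟨x₀, hx₀⟩
  set F : ℝ → ℝ := fun t => sSup (φ t '' s)
  have hcompact t : IsCompact (φ t '' s) := hs.image (hφ.comp (.prodMk_right t))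
  have hFa : 0 ≤ F a := hx₀a.trans (le_csSup (hcompact a).bddAbove (mem_image_of_mem _ hx₀))
  have hFb : F b ≤ 0 := csSup_le (hne.image _) (forall_mem_image.2 hb)
  obtain ⟨t, ht, hFt⟩ := intermediate_value_Icc' hab (hs.continuous_sSup hφ).continuousOn
    ⟨hFb, hFa⟩
  obtain ⟨x, hx, hxt⟩ := (hcompact t).sSup_mem (hne.image _)
  refine ⟨t, ht, fun y hy => ?_, x, hx, hxt.trans hFt⟩
  exact hFt ▸ le_csSup (hcompact t).bddAbove (mem_image_of_mem _ hy)

end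

theorem IsClosed.exists_forall_norm_le {E : Type*} [NormedAddCommGroup E] [ProperSpace E]
    {s : Set E} (hs : IsClosed s) (hne : s.Nonempty) : ∃ x ∈ s, ∀ y ∈ s, ‖x‖ ≤ ‖y‖ := by
  obtain ⟨x, hx, hdist⟩ := hs.exists_infDist_eq_dist hne 0
  refine ⟨x, hx, fun y hy => ?_⟩
  calc ‖x‖ = infDist 0 s := by rw [hdist, dist_zero_left]
    _ ≤ dist 0 y := infDist_le_dist_of_mem hy
    _ = ‖y‖ := dist_zero_left y

section
variable {ι : Type*} [Fintype ι]

theorem smul_dotProduct_mulVec_smul {R : Type*} [CommSemiring R] (M : Matrix ι ι R) (c : R)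
    (x : ι → R) : (c • x) ⬝ᵥ (M *ᵥ (c • x)) = c ^ 2 * (x ⬝ᵥ (M *ᵥ x)) := by
  simp only [mulVec_smul, dotProduct_smul, smul_dotProduct, smul_eq_mul]
  ring

theorem exists_mem_sphere_dotProduct_mulVec_pos {M : Matrix ι ι ℝ}
    (h : ∃ x, 0 < x ⬝ᵥ (M *ᵥ x)) : ∃ x ∈ sphere (0 : ι → ℝ) 1, 0 < x ⬝ᵥ (M *ᵥ x) := by
  obtain ⟨x, hx⟩ := h
  have hx0 : x ≠ 0 := by rintro rfl; simp at hx
  refine ⟨‖x‖⁻¹ • x, by simpa using norm_smul_inv_norm (𝕜 := ℝ) hx0, ?_⟩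
  rw [smul_dotProduct_mulVec_smul]
  exact mul_pos (by positivity) hx

theorem dotProduct_mulVec_nonpos_of_forall_mem_sphere {M : Matrix ι ι ℝ}
    (h : ∀ x ∈ sphere (0 : ι → ℝ) 1, x ⬝ᵥ (M *ᵥ x) ≤ 0) (x : ι → ℝ) :
    x ⬝ᵥ (M *ᵥ x) ≤ 0 := by
  by_contra! hx
  obtain ⟨y, hy, hpos⟩ := exists_mem_sphere_dotProduct_mulVec_pos ⟨x, hx⟩
  exact (h y hy).not_gt hpos

theorem Matrix.IsHermitian.exists_dotProduct_mulVec_pos {S : Matrix ι ι ℝ} [DecidableEq ι]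
    (hS : S.IsHermitian) {i : ι} (hi : 0 < hS.eigenvalues i) : ∃ x, 0 < x ⬝ᵥ (S *ᵥ x) :=
  ⟨hS.eigenvectorBasis i, by simpa [hS.eigenvalues_eq i] using hi⟩

theorem posSemidef_neg_add_transpose_iff (X : Matrix ι ι ℝ) :
    (-(X + Xᵀ)).PosSemidef ↔ ∀ x, x ⬝ᵥ ((X + Xᵀ) *ᵥ x) ≤ 0 := by
  have hherm : (-(X + Xᵀ)).IsHermitian := by
    simp [IsHermitian, conjTranspose_eq_transpose_of_trivial, add_comm]
  simp only [posSemidef_iff_dotProduct_mulVec, hherm, true_and, star_trivial, neg_mulVec,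
    dotProduct_neg, neg_nonneg]

end

section
variable {n q : ℕ}

theorem mem_weaklyDissipating_of_dotProduct_mulVec {A : Matrix (Fin n) (Fin n) ℝ}
    {B : Matrix (Fin n) (Fin q) ℝ} {K : Matrix (Fin q) (Fin n) ℝ}
    (hle : ∀ x, x ⬝ᵥ (((A - B * K) + (A - B * K)ᵀ) *ᵥ x) ≤ 0) {x : Fin n → ℝ} (hx : x ≠ 0)
    (hx0 : x ⬝ᵥ (((A - B * K) + (A - B * K)ᵀ) *ᵥ x) = 0) : K ∈ weaklyDissipating A B := by
  have hpsd := (posSemidef_neg_add_transpose_iff _).2 hle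
  have hMx := (hpsd.dotProduct_mulVec_zero_iff x).1 (by
    simp only [star_trivial, neg_mulVec, dotProduct_neg, hx0, neg_zero])
  rw [neg_mulVec, neg_eq_zero] at hMx
  refine ⟨hpsd, ?_⟩
  rw [isUnit_iff_ne_zero, not_not]
  exact exists_mulVec_eq_zero_iff.1 ⟨x, hx, hMx⟩

theorem dotProduct_mulVec_sub_mul_smul_transpose (A : Matrix (Fin n) (Fin n) ℝ)
    (B : Matrix (Fin n) (Fin q) ℝ) (t : ℝ) (x : Fin n → ℝ) :
    x ⬝ᵥ (((A - B * (t • Bᵀ)) + (A - B * (t • Bᵀ))ᵀ) *ᵥ x)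
      = x ⬝ᵥ ((A + Aᵀ) *ᵥ x) - 2 * t * ((Bᵀ *ᵥ x) ⬝ᵥ (Bᵀ *ᵥ x)) := by
  have hBB : x ⬝ᵥ ((B * Bᵀ) *ᵥ x) = (Bᵀ *ᵥ x) ⬝ᵥ (Bᵀ *ᵥ x) := by
    rw [← mulVec_mulVec, dotProduct_mulVec, ← mulVec_transpose]
  simp only [transpose_sub, transpose_mul, transpose_smul, transpose_transpose,
    Matrix.mul_smul, add_mulVec, sub_mulVec, smul_mulVec, dotProduct_add, dotProduct_sub,
    dotProduct_smul, smul_eq_mul, hBB]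
  ring

theorem weaklyDissipating_nonempty {A : Matrix (Fin n) (Fin n) ℝ}
    {B : Matrix (Fin n) (Fin q) ℝ}
    (hker : ∀ x : Fin n → ℝ, x ≠ 0 → Bᵀ *ᵥ x = 0 → x ⬝ᵥ ((A + Aᵀ) *ᵥ x) < 0)
    (hpos : ∃ x, 0 < x ⬝ᵥ ((A + Aᵀ) *ᵥ x)) : (weaklyDissipating A B).Nonempty := by
  have hsphere : IsCompact (sphere (0 : Fin n → ℝ) 1) := isCompact_sphere 0 1
  have hne : ∀ x ∈ sphere (0 : Fin n → ℝ) 1, x ≠ 0 := fun x hx =>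
    ne_zero_of_mem_sphere one_ne_zero ⟨x, hx⟩
  obtain ⟨u, hu, hu_pos⟩ := exists_mem_sphere_dotProduct_mulVec_pos hpos
  obtain ⟨N, hN⟩ := hsphere.exists_nat_forall_lt_mul (h := fun x => x ⬝ᵥ ((A + Aᵀ) *ᵥ x))
    (g := fun x => (Bᵀ *ᵥ x) ⬝ᵥ (Bᵀ *ᵥ x)) (by fun_prop) (by fun_prop)
    (fun x => Fintype.sum_nonneg fun _ => mul_self_nonneg _)
    (fun x hx hgx => hker x (hne x hx) (dotProduct_self_eq_zero.1 hgx))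
  obtain ⟨t, -, hle, x, hx, hx0⟩ := hsphere.exists_forall_le_zero_and_exists_eq_zero
    (φ := fun t x => x ⬝ᵥ (((A - B * (t • Bᵀ)) + (A - B * (t • Bᵀ))ᵀ) *ᵥ x)) (by fun_prop)
    (a := 0) (b := N / 2) (by positivity)
    ⟨u, hu, by simpa [dotProduct_mulVec_sub_mul_smul_transpose] using hu_pos.le⟩
    (fun x hx => by rw [dotProduct_mulVec_sub_mul_smul_transpose]; linarith [hN x hx])
  exact ⟨t • Bᵀ, mem_weaklyDissipating_of_dotProduct_mulVec
    (dotProduct_mulVec_nonpos_of_forall_mem_sphere hle) (hne x hx) hx0⟩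

theorem isClosed_weaklyDissipating (A : Matrix (Fin n) (Fin n) ℝ)
    (B : Matrix (Fin n) (Fin q) ℝ) : IsClosed (weaklyDissipating A B) := by
  have heq : weaklyDissipating A B =
      (⋂ x : Fin n → ℝ, {K | x ⬝ᵥ (((A - B * K) + (A - B * K)ᵀ) *ᵥ x) ≤ 0}) ∩
        {K | ((A - B * K) + (A - B * K)ᵀ).det = 0} := by
    ext K
    simp only [weaklyDissipating, posSemidef_neg_add_transpose_iff, isUnit_iff_ne_zero, not_not,
      mem_ofPred_eq, mem_inter_iff, mem_iInter]
  rw [heq]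
  exact (isClosed_iInter fun x => isClosed_le (by fun_prop) continuous_const).inter
    (isClosed_eq (by fun_prop) continuous_const)

end

section
attribute [local instance] Matrix.frobeniusNormedAddCommGroup Matrix.frobeniusNormedSpace

variable {q n : ℕ}

theorem frobNorm_eq_norm (K : Matrix (Fin q) (Fin n) ℝ) : frobNorm K = ‖K‖ := by
  rw [frobNorm, frobenius_norm_def, Real.sqrt_eq_rpow]
  simp

theorem IsClosed.exists_forall_frobNorm_le {S : Set (Matrix (Fin q) (Fin n) ℝ)}
    (hS : IsClosed S) (hne : S.Nonempty) : ∃ K ∈ S, ∀ K' ∈ S, frobNorm K ≤ frobNorm K' := by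
  simp only [frobNorm_eq_norm]
  exact hS.exists_forall_norm_le hne

end

/-- Proposition 4.2 of the paper: if `A + Aᵀ` is negative definite
on the kernel of `Bᵀ` and the largest eigenvalue of `(A+Aᵀ)/2` is positive, then the
set of weakly dissipating feedbacks is nonempty and the infimum of the Frobenius norm
over it is attained. -/
theorem min_frobenius_weakly_dissipating_attained {n q : ℕ}
    (A : Matrix (Fin n) (Fin n) ℝ) (B : Matrix (Fin n) (Fin q) ℝ)
    (hker : ∀ x : Fin n → ℝ, x ≠ 0 → Bᵀ *ᵥ x = 0 → x ⬝ᵥ ((A + Aᵀ) *ᵥ x) < 0)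
    (hSym : ((1 / 2 : ℝ) • (A + Aᵀ)).IsHermitian)
    (hpos : ∃ i, 0 < hSym.eigenvalues i) :
    (weaklyDissipating A B).Nonempty ∧
      ∃ Kstar ∈ weaklyDissipating A B,
        ∀ K ∈ weaklyDissipating A B, frobNorm Kstar ≤ frobNorm K := by
  obtain ⟨i, hi⟩ := hpos
  obtain ⟨x, hx⟩ := hSym.exists_dotProduct_mulVec_pos hi
  have hne : (weaklyDissipating A B).Nonempty := by
    refine weaklyDissipating_nonempty hker ⟨x, ?_⟩
    rw [smul_mulVec, dotProduct_smul, smul_eq_mul] at hx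
    linarith
  exact ⟨hne, (isClosed_weaklyDissipating A B).exists_forall_frobNorm_le hne⟩
end
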